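/- arXiv:2112.06187 — 8 statements merged into one kernel-verified Lean document; each statement's English description precedes it below -/
import Mathlib

section
/- For all integers m ≥ 3 and n ≥ 0, a_{m+n} = a_{m-1}·a_{n+2} + a_{m-3}·a_{n+1} + a_{m-2}·a_n. -/
/-! Every solution of the Narayana recurrence is the combination of its first three values with
Narayana numbers as coefficients; apply this to the shifted solution `j ↦ a_{n+j}`. -/

def narayana : ℕ → ℕ
  | 0 => 0
  | 1 => 1
  | 2 => 1
  | n + 3 => narayana (n + 2) + narayana n

theorem apply_add_three_eq_narayana_smul {M : Type*} [AddCommMonoid M] {f : ℕ → M}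
    (hf : ∀ j, f (j + 3) = f (j + 2) + f j) :
    ∀ k, f (k + 3) = narayana (k + 2) • f 2 + narayana k • f 1 + narayana (k + 1) • f 0
  | 0 => by simp [narayana, hf 0]
  | 1 => by simp only [Nat.reduceAdd, hf 1, hf 0, zero_add, narayana, add_zero, one_smul]; abel
  | 2 => by
    simp only [Nat.reduceAdd, hf 2, hf 1, hf 0, zero_add, narayana, add_zero, two_nsmul, one_smul]
    abel
  | k + 3 => by
    have ih₂ := apply_add_three_eq_narayana_smul hf (k + 2)
    have ih₀ := apply_add_three_eq_narayana_smul hf k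
    rw [hf (k + 3), ih₂, ih₀]
    simp only [narayana, add_smul]
    abel

theorem narayana_add (m n : ℕ) (hm : 3 ≤ m) :
    narayana (m + n) = narayana (m - 1) * narayana (n + 2) +
      narayana (m - 3) * narayana (n + 1) + narayana (m - 2) * narayana n := by
  obtain ⟨k, rfl⟩ : ∃ k, m = k + 3 := ⟨m - 3, by omega⟩
  have hshift : ∀ j, narayana (n + (j + 3)) = narayana (n + (j + 2)) + narayana (n + j) :=
    fun j => narayana.eq_4 (n + j)
  simpa [add_comm] using apply_add_three_eq_narayana_smul (f := fun j => narayana (n + j)) hshift k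
end

section
/- The sequence of Narayana numbers reduced modulo 3 is periodic with period 8, i.e., for all n ≥ 0, a_{n+8} ≡ a_n (mod 3). -/
theorem narayana_add_three (n : ℕ) : narayana (n + 3) = narayana (n + 2) + narayana n := rfl

theorem modEq_of_add_three_eq {a b : ℕ → ℕ} {m : ℕ}
    (ha : ∀ n, a (n + 3) = a (n + 2) + a n) (hb : ∀ n, b (n + 3) = b (n + 2) + b n)
    (h0 : a 0 ≡ b 0 [MOD m]) (h1 : a 1 ≡ b 1 [MOD m]) (h2 : a 2 ≡ b 2 [MOD m]) :
    ∀ n, a n ≡ b n [MOD m]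
  | 0 => h0
  | 1 => h1
  | 2 => h2
  | n + 3 => by
    rw [ha, hb]
    exact (modEq_of_add_three_eq ha hb h0 h1 h2 (n + 2)).add
      (modEq_of_add_three_eq ha hb h0 h1 h2 n)

theorem narayana_mod_three_periodic (n : ℕ) :
    narayana (n + 8) ≡ narayana n [MOD 3] :=
  -- `narayana 8, 9, 10 = 9, 13, 19 ≡ 0, 1, 1 [MOD 3]`
  modEq_of_add_three_eq (a := fun k => narayana (k + 8)) (fun k => narayana_add_three (k + 8))
    narayana_add_three (by decide) (by decide) (by decide) n
end

section
/- For all integers s ≥ 1 and n ≥ 1, a_{8s·3^n} ≡ 2s·3^(n+2) (mod 3^(n+3)). -/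
/-!
In `ℤ[x]/(x³ - x² - 1)` one has `x ^ (n + 3) = a (n + 1) + a n x + a (n + 2) x²`, so the
additive functional `ℓ (p + q x + r x²) = q + r` satisfies `ℓ (x ^ n) = a n`.
Computing `x ^ 24` gives `x ^ 24 ≡ 1 + 3² D (mod 3⁴)` with `D = 1 + 7x + 8x²`. Cubing
`a ≡ 1 + 3 ^ m D (mod 3 ^ (m + 2))` yields `a³ ≡ 1 + 3 ^ (m + 1) D (mod 3 ^ (m + 3))` once
`m ≥ 2`, hence `x ^ (8 · 3ⁿ) ≡ 1 + 3 ^ (n + 1) D (mod 3 ^ (n + 3))`, and the `s`-th power of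
this is `≡ 1 + s 3 ^ (n + 1) D`. Apply `ℓ` and use `ℓ D = 15 ≡ 6 (mod 9)`.
-/

open Polynomial

theorem AddMonoidHom.map_natCast_mul {R S : Type*} [NonAssocSemiring R] [NonAssocSemiring S]
    (ℓ : R →+ S) (c : ℕ) (y : R) : ℓ (c * y) = c * ℓ y := by
  rw [← nsmul_eq_mul, map_nsmul, nsmul_eq_mul]

theorem AddMonoidHom.natCast_dvd_map {R S : Type*} [Semiring R] [Semiring S]
    (ℓ : R →+ S) {c : ℕ} {y : R} (h : (c : R) ∣ y) : (c : S) ∣ ℓ y := by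
  obtain ⟨z, rfl⟩ := h
  exact ⟨ℓ z, ℓ.map_natCast_mul c z⟩

section Congruence

variable {R : Type*} [CommRing R]

theorem pow_dvd_pow_sub_one_add_mul {t a d : R} {k : ℕ}
    (h : t ^ (k + 4) ∣ a - (1 + t ^ (k + 2) * d)) (s : ℕ) :
    t ^ (k + 4) ∣ a ^ s - (1 + s * t ^ (k + 2) * d) := by
  induction s with
  | zero => simp
  | succ s ih =>
    have hsplit : a ^ (s + 1) - (1 + ↑(s + 1) * t ^ (k + 2) * d) =
        (a ^ s - (1 + s * t ^ (k + 2) * d)) * a +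
          (1 + s * t ^ (k + 2) * d) * (a - (1 + t ^ (k + 2) * d)) +
          t ^ (k + 4) * (s * t ^ k * d ^ 2) := by
      push_cast; ring
    rw [hsplit]
    exact ((dvd_mul_of_dvd_left ih _).add (dvd_mul_of_dvd_right h _)).add (dvd_mul_right _ _)

theorem three_pow_dvd_pow_three_sub_one_add_mul {a d : R} {k : ℕ}
    (h : (3 : R) ^ (k + 4) ∣ a - (1 + 3 ^ (k + 2) * d)) :
    (3 : R) ^ (k + 5) ∣ a ^ 3 - (1 + 3 ^ (k + 3) * d) := by
  set b := 1 + (3 : R) ^ (k + 2) * d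
  set u := a - b
  have hsplit : a ^ 3 - (1 + 3 ^ (k + 3) * d) = 3 * u * (b ^ 2 + b * u) + u * u ^ 2 +
      3 ^ (k + 5) * (3 ^ k * d ^ 2 + 3 ^ (2 * k + 1) * d ^ 3) := by
    rw [show a = b + u by ring]; ring
  have hu2 : (3 : R) ∣ u ^ 2 := ((dvd_pow_self 3 (by omega)).trans h).pow two_ne_zero
  rw [hsplit]
  refine ((dvd_mul_of_dvd_left ?_ _).add ?_).add (dvd_mul_right _ _)
  · rw [pow_succ']; exact mul_dvd_mul_left 3 h
  · rw [pow_succ]; exact mul_dvd_mul h hu2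

end Congruence

section NarayanaPowers

variable {R : Type*} [CommRing R] {x : R}

theorem pow_add_three_eq_narayana (hx : x ^ 3 = x ^ 2 + 1) (n : ℕ) :
    x ^ (n + 3) = narayana (n + 1) + narayana n * x + narayana (n + 2) * x ^ 2 := by
  induction n with
  | zero => rw [hx]; norm_num [narayana]; ring
  | succ n ih =>
    rw [pow_succ, ih]
    simp only [narayana]
    push_cast
    linear_combination (narayana (n + 2) : R) * hx

theorem map_pow_eq_narayana (hx : x ^ 3 = x ^ 2 + 1) (ℓ : R →+ ℤ)
    (hℓ : ∀ k < 3, ℓ (x ^ k) = narayana k) (n : ℕ) : ℓ (x ^ n) = narayana n := by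
  induction n using narayana.induct with
  | case1 => exact hℓ 0 (by norm_num)
  | case2 => exact hℓ 1 (by norm_num)
  | case3 => exact hℓ 2 (by norm_num)
  | case4 n ih2 ih0 =>
    rw [show x ^ (n + 3) = x ^ (n + 2) + x ^ n by rw [pow_add, hx]; ring, map_add, ih2, ih0,
      narayana, Nat.cast_add]

theorem three_pow_dvd_pow_eight_mul_three_pow_sub (hx : x ^ 3 = x ^ 2 + 1) (k : ℕ) :
    (3 : R) ^ (k + 4) ∣ x ^ (8 * 3 ^ (k + 1)) - (1 + 3 ^ (k + 2) * (1 + 7 * x + 8 * x ^ 2)) := by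
  induction k with
  | zero =>
    rw [show 8 * 3 ^ (0 + 1) = 21 + 3 by norm_num, pow_add_three_eq_narayana hx]
    exact ⟨23 + 15 * x + 33 * x ^ 2, by norm_num [narayana]; ring⟩
  | succ k ih =>
    rw [pow_succ 3 (k + 1), ← mul_assoc, pow_mul]
    exact three_pow_dvd_pow_three_sub_one_add_mul ih

end NarayanaPowers

noncomputable def narayanaPoly : ℤ[X] := X ^ 3 - X ^ 2 - 1

theorem narayanaPoly_monic : narayanaPoly.Monic := by
  unfold narayanaPoly; monicity!

theorem narayanaPoly_degree : narayanaPoly.degree = 3 := by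
  unfold narayanaPoly; compute_degree!

theorem root_narayanaPoly_pow_three :
    AdjoinRoot.root narayanaPoly ^ 3 = AdjoinRoot.root narayanaPoly ^ 2 + 1 := by
  have h : AdjoinRoot.mk narayanaPoly (X ^ 3 - X ^ 2 - 1) = 0 := AdjoinRoot.mk_self
  rw [map_sub, map_sub, map_pow, map_pow, AdjoinRoot.mk_X, map_one] at h
  linear_combination h

noncomputable def narayanaFunctional : AdjoinRoot narayanaPoly →+ ℤ :=
  ((lcoeff ℤ 1 + lcoeff ℤ 2).comp (AdjoinRoot.modByMonicHom narayanaPoly_monic)).toAddMonoidHom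

theorem narayanaFunctional_root_pow (n : ℕ) :
    narayanaFunctional (AdjoinRoot.root narayanaPoly ^ n) = narayana n := by
  refine map_pow_eq_narayana root_narayanaPoly_pow_three _ (fun k hk => ?_) n
  have hmod : AdjoinRoot.modByMonicHom narayanaPoly_monic (AdjoinRoot.root narayanaPoly ^ k) =
      X ^ k := by
    rw [← AdjoinRoot.mk_X, ← map_pow, AdjoinRoot.modByMonicHom_mk,
      modByMonic_eq_self_iff narayanaPoly_monic, narayanaPoly_degree, degree_X_pow]
    exact_mod_cast hk
  simp only [narayanaFunctional, LinearMap.toAddMonoidHom_coe, LinearMap.coe_comp,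
    Function.comp_apply, hmod, LinearMap.add_apply, lcoeff_apply, coeff_X_pow]
  interval_cases k <;> rfl

theorem narayanaFunctional_one_add_mul (c : ℕ) :
    narayanaFunctional (1 + c * (1 + 7 * AdjoinRoot.root narayanaPoly +
      8 * AdjoinRoot.root narayanaPoly ^ 2)) = c * 15 := by
  set x := AdjoinRoot.root narayanaPoly
  have h0 : narayanaFunctional 1 = 0 := by simpa [narayana] using narayanaFunctional_root_pow 0
  have h1 : narayanaFunctional x = 1 := by simpa [narayana] using narayanaFunctional_root_pow 1
  have h2 : narayanaFunctional (x ^ 2) = 1 := by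
    simpa [narayana] using narayanaFunctional_root_pow 2
  have h7 := narayanaFunctional.map_natCast_mul 7 x
  have h8 := narayanaFunctional.map_natCast_mul 8 (x ^ 2)
  simp only [Nat.cast_ofNat] at h7 h8
  simp [narayanaFunctional.map_natCast_mul, h0, h1, h2, h7, h8]

theorem narayana_cong_zero_general (s n : ℕ) (hn : 1 ≤ n) :
    narayana (8 * s * 3 ^ n) ≡ 2 * s * 3 ^ (n + 2) [MOD 3 ^ (n + 3)] := by
  obtain ⟨k, rfl⟩ := Nat.exists_eq_add_of_le' hn
  have hdvd := pow_dvd_pow_sub_one_add_mul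
    (three_pow_dvd_pow_eight_mul_three_pow_sub root_narayanaPoly_pow_three k) s
  rw [← pow_mul, mul_right_comm, ← Nat.cast_ofNat, ← Nat.cast_pow, ← Nat.cast_pow,
    ← Nat.cast_mul] at hdvd
  have hℓ := narayanaFunctional.natCast_dvd_map hdvd
  rw [map_sub, narayanaFunctional_root_pow, narayanaFunctional_one_add_mul] at hℓ
  rw [← Int.natCast_modEq_iff]
  push_cast at hℓ ⊢
  calc (narayana (8 * s * 3 ^ (k + 1)) : ℤ) ≡ s * 3 ^ (k + 2) * 15 [ZMOD 3 ^ (k + 4)] :=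
        (Int.modEq_iff_dvd.2 hℓ).symm
    _ = 2 * s * 3 ^ (k + 1 + 2) + 3 ^ (k + 4) * s := by ring
    _ ≡ 2 * s * 3 ^ (k + 1 + 2) [ZMOD 3 ^ (k + 1 + 3)] := Int.add_mul_emod_self_left _ _ _

theorem narayana_cong_zero (s n : ℕ) (hs : 1 ≤ s) (hn : 1 ≤ n) :
    narayana (8 * s * 3 ^ n) ≡ 2 * s * 3 ^ (n + 2) [MOD 3 ^ (n + 3)] :=
  narayana_cong_zero_general s n hn
end

section
/- For all integers s ≥ 1 and n ≥ 1, a_{8s·3^n + 1} ≡ 1 + s·3^(n+1) + 2s·3^(n+2) (mod 3^(n+3)). -/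
open Matrix

section Ring

variable {R : Type*} [Ring R]

theorem exists_one_add_pow_eq (X : R) (s : ℕ) : ∃ K, (1 + X) ^ s = 1 + s • X + X ^ 2 * K := by
  induction s with
  | zero => exact ⟨0, by simp⟩
  | succ s ih =>
    obtain ⟨K, hK⟩ := ih
    refine ⟨s • 1 + K + K * X, ?_⟩
    rw [pow_succ, hK, succ_nsmul]
    noncomm_ring

theorem exists_one_add_three_pow_smul_pow_three (k : ℕ) (F : R) :
    ∃ G, (1 + 3 ^ (k + 2) • F) ^ 3 = 1 + 3 ^ (k + 3) • (F + 9 • G) :=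
  ⟨3 ^ k • F ^ 2 + 3 ^ (2 * k + 1) • F ^ 3, by
    have cube (Y : R) : (1 + Y) ^ 3 = 1 + 3 • Y + 3 • Y ^ 2 + Y ^ 3 := by noncomm_ring
    rw [cube, smul_pow, smul_pow]
    module⟩

end Ring

namespace Narayana

def companion : Matrix (Fin 3) (Fin 3) ℤ := !![1, 0, 1; 1, 0, 0; 0, 1, 0]

theorem companion_pow_mulVec (m : ℕ) :
    companion ^ m *ᵥ ![1, 1, 0] = ![(narayana (m + 2) : ℤ), narayana (m + 1), narayana m] := by
  induction m with
  | zero => simp [narayana]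
  | succ m ih =>
    rw [pow_succ', ← mulVec_mulVec, ih]
    ext i; fin_cases i <;> simp [companion, mulVec, dotProduct, Fin.sum_univ_three, narayana]

theorem narayana_succ_eq_companion_pow_mulVec (m : ℕ) :
    (narayana (m + 1) : ℤ) = (companion ^ m *ᵥ ![1, 1, 0]) 1 := by
  rw [companion_pow_mulVec]
  rfl

def E : Matrix (Fin 3) (Fin 3) ℤ := !![655, 305, 447; 447, 208, 305; 305, 142, 208]

theorem companion_pow_twenty_four : companion ^ 24 = 1 + 9 • E := by
  have h3 : companion ^ 3 = !![2, 1, 1; 1, 1, 1; 1, 0, 1] := by simp [companion, pow_succ]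
  rw [show 24 = 3 * 2 * 2 * 2 by rfl, pow_mul, pow_mul, pow_mul, h3]
  ext i j; fin_cases i <;> fin_cases j <;> simp [E, sq, one_fin_three]

theorem exists_companion_pow_eight_mul_three_pow (m : ℕ) :
    ∃ K, companion ^ (8 * 3 ^ (m + 1)) = 1 + 3 ^ (m + 2) • (E + 9 • K) := by
  induction m with
  | zero => exact ⟨0, by simpa using companion_pow_twenty_four⟩
  | succ m ih =>
    obtain ⟨K, hK⟩ := ih
    obtain ⟨G, hG⟩ := exists_one_add_three_pow_smul_pow_three m (E + 9 • K)
    refine ⟨K + G, ?_⟩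
    rw [pow_succ 3 (m + 1), ← mul_assoc, pow_mul, hK, hG]
    module

theorem exists_narayana_eight_mul_three_pow_add_one_eq (s m : ℕ) : ∃ c : ℤ,
    (narayana (8 * s * 3 ^ (m + 1) + 1) : ℤ) = 1 + 7 * s * 3 ^ (m + 2) + 3 ^ (m + 4) * c := by
  obtain ⟨K, hK⟩ := exists_companion_pow_eight_mul_three_pow m
  obtain ⟨L, hL⟩ := exists_one_add_pow_eq (3 ^ (m + 2) • (E + 9 • K)) s
  have hpow : companion ^ (8 * s * 3 ^ (m + 1)) =
      1 + s • 3 ^ (m + 2) • (E + 9 • K) + (3 ^ (m + 2) • (E + 9 • K)) ^ 2 * L := by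
    rw [mul_right_comm, pow_mul, hK, hL]
  have hE : (E *ᵥ ![1, 1, 0]) 1 = 655 := rfl
  refine ⟨s * (72 + (K *ᵥ ![1, 1, 0]) 1) + 3 ^ m * (((E + 9 • K) ^ 2 * L) *ᵥ ![1, 1, 0]) 1, ?_⟩
  rw [narayana_succ_eq_companion_pow_mulVec, hpow, smul_pow, smul_mul_assoc]
  simp only [add_mulVec, smul_mulVec, one_mulVec, Pi.add_apply, Pi.smul_apply, hE,
    cons_val_one, cons_val_zero]
  simp only [nsmul_eq_mul, Nat.cast_pow, Nat.cast_ofNat]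
  ring

end Narayana

theorem narayana_cong_one_general (s n : ℕ) (hn : 1 ≤ n) :
    narayana (8 * s * 3 ^ n + 1) ≡ 1 + s * 3 ^ (n + 1) + 2 * s * 3 ^ (n + 2) [MOD 3 ^ (n + 3)] := by
  obtain ⟨m, rfl⟩ := Nat.exists_eq_add_of_le' hn
  obtain ⟨c, hc⟩ := Narayana.exists_narayana_eight_mul_three_pow_add_one_eq s m
  rw [Nat.modEq_iff_dvd]
  exact ⟨-c, by push_cast; rw [hc]; ring⟩

theorem narayana_cong_one (s n : ℕ) (hs : 1 ≤ s) (hn : 1 ≤ n) :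
    narayana (8 * s * 3 ^ n + 1) ≡ 1 + s * 3 ^ (n + 1) + 2 * s * 3 ^ (n + 2) [MOD 3 ^ (n + 3)] :=
  narayana_cong_one_general s n hn
end

section
/- For all integers s ≥ 1 and n ≥ 1, a_{8s·3^n + 2} ≡ 1 + 2s·3^(n+2) (mod 3^(n+3)). -/
/-!
The companion matrix `M` of `X³ - X² - 1` moves the window `(aₙ₊₂, aₙ₊₁, aₙ)` one step, and
`M²⁴ = 1 + 9B` for an explicit integer matrix `B`. Cubing `1 + 3ʲ⁺²y` modulo `3ʲ⁺⁵` only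
multiplies `3ʲ⁺²y` by `3`, so `M^(24·3ᵐ) ≡ 1 + 3ᵐ⁺²B (mod 3ᵐ⁺⁴)`, and raising this to the `s`-th
power is linear modulo `(3ᵐ⁺²)²`. For `n = m + 1` this gives `M^(8s·3ⁿ) ≡ 1 + s·3ⁿ⁺¹B (mod 3ⁿ⁺³)`, and
`a_{8s·3ⁿ+2}` is the first entry of `M^(8s·3ⁿ)(1, 1, 0)`, where `B(1, 1, 0)` has first entry
`960 ≡ 6 (mod 9)`.
-/

section PowerCongruences

variable {R : Type*} [Ring R]

theorem one_add_three_pow_smul_pow_three (j : ℕ) (u : R) :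
    (1 + 3 ^ (j + 2) • u) ^ 3 =
      1 + 3 ^ (j + 3) • u + 3 ^ (j + 5) • (3 ^ j • u ^ 2 + 3 ^ (2 * j + 1) • u ^ 3) := by
  simp only [pow_succ, pow_zero, one_mul, add_mul, mul_add, mul_one, smul_mul_assoc,
    mul_smul_comm, smul_add, mul_assoc]
  module

theorem exists_pow_three_pow_eq_of_eq_one_add_nine_smul {x y : R} (h : x = 1 + 9 • y) (m : ℕ) :
    ∃ z : R, x ^ 3 ^ m = 1 + 3 ^ (m + 2) • y + 3 ^ (m + 4) • z := by
  induction m with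
  | zero => exact ⟨0, by simp [h]⟩
  | succ m ih =>
    obtain ⟨z, hz⟩ := ih
    have hx : x ^ 3 ^ m = 1 + 3 ^ (m + 2) • (y + 9 • z) := by rw [hz]; module
    refine ⟨z + 3 ^ m • (y + 9 • z) ^ 2 + 3 ^ (2 * m + 1) • (y + 9 • z) ^ 3, ?_⟩
    rw [pow_succ, pow_mul, hx, one_add_three_pow_smul_pow_three]
    module

theorem exists_pow_eq_of_eq_one_add (p j : ℕ) {x y z : R}
    (h : x = 1 + p ^ (j + 2) • y + p ^ (j + 4) • z) (s : ℕ) :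
    ∃ w : R, x ^ s = 1 + (s * p ^ (j + 2)) • y + p ^ (j + 4) • w := by
  induction s with
  | zero => exact ⟨0, by simp⟩
  | succ s ih =>
    obtain ⟨w, hw⟩ := ih
    refine ⟨w + z + (s * p ^ j) • (y * y) + (s * p ^ (j + 2)) • (y * z) + p ^ (j + 2) • (w * y) +
      p ^ (j + 4) • (w * z), ?_⟩
    rw [pow_succ, hw, h]
    simp only [add_mul, mul_add, one_mul, mul_one, smul_mul_assoc, mul_smul_comm, smul_add]
    module

end PowerCongruences

open Matrix

def narayanaMatrix : Matrix (Fin 3) (Fin 3) ℤ := !![1, 0, 1; 1, 0, 0; 0, 1, 0]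

theorem narayanaMatrix_pow_mulVec (n : ℕ) :
    narayanaMatrix ^ n *ᵥ ![1, 1, 0] = ![(narayana (n + 2) : ℤ), narayana (n + 1), narayana n] := by
  induction n with
  | zero => simp [narayana]
  | succ n ih =>
    rw [pow_succ', ← mulVec_mulVec, ih]
    ext i
    fin_cases i <;> simp [narayanaMatrix, mulVec, dotProduct, Fin.sum_univ_three, narayana]

theorem narayanaMatrix_pow_twentyFour :
    narayanaMatrix ^ 24 = 1 + 9 • !![655, 305, 447; 447, 208, 305; 305, 142, 208] := by
  rw [show 24 = 2 * 2 * 2 * 3 from rfl, pow_mul, pow_mul, pow_mul, one_fin_three]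
  norm_num [narayanaMatrix, sq, pow_three]

theorem narayana_add_two_eq_of_narayanaMatrix_pow_eq {N k l : ℕ} {B W : Matrix (Fin 3) (Fin 3) ℤ}
    (h : narayanaMatrix ^ N = 1 + k • B + l • W) :
    (narayana (N + 2) : ℤ) = 1 + k * (B *ᵥ ![1, 1, 0]) 0 + l * (W *ᵥ ![1, 1, 0]) 0 := by
  have hentry := congrFun (narayanaMatrix_pow_mulVec N) 0
  rw [h, add_mulVec, add_mulVec, one_mulVec, smul_mulVec, smul_mulVec] at hentry
  simp only [Pi.add_apply, cons_val_zero, nsmul_eq_mul] at hentry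
  exact hentry.symm

theorem narayana_cong_two_general (s n : ℕ) (hn : 1 ≤ n) :
    narayana (8 * s * 3 ^ n + 2) ≡ 1 + 2 * s * 3 ^ (n + 2) [MOD 3 ^ (n + 3)] := by
  obtain ⟨m, rfl⟩ : ∃ m, n = m + 1 := ⟨n - 1, by omega⟩
  obtain ⟨z, hz⟩ := exists_pow_three_pow_eq_of_eq_one_add_nine_smul narayanaMatrix_pow_twentyFour m
  obtain ⟨w, hw⟩ := exists_pow_eq_of_eq_one_add 3 m hz s
  have hentry := narayana_add_two_eq_of_narayanaMatrix_pow_eq (N := 24 * 3 ^ m * s)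
    (by rw [pow_mul, pow_mul, hw])
  have hB : (!![655, 305, 447; 447, 208, 305; 305, 142, 208] *ᵥ ![1, 1, 0]) 0 = (960 : ℤ) := rfl
  rw [show 8 * s * 3 ^ (m + 1) = 24 * 3 ^ m * s by ring, ← Int.natCast_modEq_iff,
    Int.modEq_iff_dvd]
  push_cast
  rw [hentry, hB]
  exact ⟨-106 * s - (w *ᵥ ![1, 1, 0]) 0, by push_cast; ring⟩

theorem narayana_cong_two (s n : ℕ) (hs : 1 ≤ s) (hn : 1 ≤ n) :
    narayana (8 * s * 3 ^ n + 2) ≡ 1 + 2 * s * 3 ^ (n + 2) [MOD 3 ^ (n + 3)] :=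
  narayana_cong_two_general s n hn
end

section
/- If n ≥ 1 and n ≡ 8 (mod 24), then the 3-adic valuation of a_n equals 2. -/
theorem padicValNat_eq_of_mod_pow_succ_eq_pow {p k m : ℕ} (hp : 1 < p)
    (h : m % p ^ (k + 1) = p ^ k) : padicValNat p m = k := by
  have hpk : 0 < p ^ k := pow_pos (by omega) k
  have hm : m ≠ 0 := by
    rintro rfl
    simp at h
    omega
  have hdvd : p ^ k ∣ m := by
    rw [← Nat.div_add_mod m (p ^ (k + 1)), h, pow_succ, mul_assoc]
    exact Dvd.dvd.add (dvd_mul_right _ _) dvd_rfl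
  have hndvd : ¬ p ^ (k + 1) ∣ m := by
    rw [Nat.dvd_iff_mod_eq_zero, h]
    exact hpk.ne'
  rw [padicValNat_dvd_iff_le_of_ne_one hp.ne' hm] at hdvd hndvd
  omega

theorem periodic_of_narayana_recurrence {α : Type*} [Add α] {f : ℕ → α}
    (hf : ∀ n, f (n + 3) = f (n + 2) + f n) {p : ℕ}
    (h0 : f p = f 0) (h1 : f (p + 1) = f 1) (h2 : f (p + 2) = f 2) : Function.Periodic f p := by
  intro n
  induction n using Nat.strong_induction_on with
  | _ n ih =>
    match n with
    | 0 => simpa using h0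
    | 1 => simpa [add_comm] using h1
    | 2 => simpa [add_comm] using h2
    | m + 3 =>
      rw [show m + 3 + p = m + p + 3 by omega, hf, hf, show m + p + 2 = m + 2 + p by omega,
        ih (m + 2) (by omega), ih m (by omega)]

theorem narayana_cast_zmod_periodic :
    Function.Periodic (fun n => (narayana n : ZMod 27)) 72 :=
  periodic_of_narayana_recurrence (fun n => by simp only [narayana_add_three, Nat.cast_add])
    (by decide) (by decide) (by decide)

theorem narayana_mod_27_of_mod_24_eq_8 {n : ℕ} (h : n % 24 = 8) : narayana n % 27 = 9 := by
  have hcast : (narayana n : ZMod 27) = 9 := by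
    rw [← narayana_cast_zmod_periodic.map_mod_nat n]
    obtain h72 | h72 | h72 : n % 72 = 8 ∨ n % 72 = 32 ∨ n % 72 = 56 := by omega
    all_goals rw [h72]; decide
  rw [← ZMod.val_natCast, hcast]
  rfl

theorem narayana_val_two_general (n : ℕ) (h : n % 24 = 8) :
    padicValNat 3 (narayana n) = 2 :=
  padicValNat_eq_of_mod_pow_succ_eq_pow (by norm_num) (narayana_mod_27_of_mod_24_eq_8 h)

theorem narayana_val_two (n : ℕ) (hn : 1 ≤ n) (h : n % 24 = 8) :
    padicValNat 3 (narayana n) = 2 :=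
  narayana_val_two_general n h
end

section
/- If n ≥ 1 and n ≡ 21 (mod 24), then ν_3(a_n) = ν_3(n+3) + 1, where ν_3 denotes the 3-adic valuation. -/
/-!
The Narayana recurrence has companion matrix `M`, and `a n` is the `(2, 1)` entry of
`M ^ (n + 3)`. One computes `M ^ 24 = 1 + 9 A` with `A 2 1 = 142 ≢ 0 (mod 3)`. For `k ≥ 1`,
cubing `1 + 3 ^ k B` gives `1 + 3 ^ (k + 1) B'` with `B' ≡ B (mod 3)` (lifting the exponent),
while raising it to a power `u` gives `1 + 3 ^ k (u B)` modulo `3 ^ (k + 1)`. Hence for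
`n + 3 = 24 · 3 ^ v · u` with `3 ∤ u`, `a n = 3 ^ (v + 2) (142 u + 3 c)`, so
`ν₃(a n) = v + 2 = ν₃(n + 3) + 1`.
-/

open Matrix

section PowOneAddSmul

variable {R : Type*} [Ring R]

theorem exists_one_add_smul_pow_three (j : ℕ) (B : R) :
    ∃ C : R, (1 + (3 : ℤ) ^ (j + 1) • B) ^ 3 = 1 + (3 : ℤ) ^ (j + 2) • (B + (3 : ℤ) • C) := by
  refine ⟨(3 : ℤ) ^ j • (B * B) + (3 : ℤ) ^ (2 * j) • (B * B * B), ?_⟩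
  simp only [pow_succ, pow_zero, one_mul, mul_add, add_mul, mul_one, smul_mul_assoc,
    mul_smul_comm, smul_smul, smul_add, mul_assoc]
  module

theorem exists_one_add_smul_pow_three_pow (j : ℕ) (B : R) (v : ℕ) :
    ∃ C : R,
      (1 + (3 : ℤ) ^ (j + 1) • B) ^ 3 ^ v = 1 + (3 : ℤ) ^ (j + v + 1) • (B + (3 : ℤ) • C) := by
  induction v with
  | zero => exact ⟨0, by simp⟩
  | succ v ih =>
    obtain ⟨C, hC⟩ := ih
    obtain ⟨D, hD⟩ := exists_one_add_smul_pow_three (j + v) (B + (3 : ℤ) • C)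
    refine ⟨C + D, ?_⟩
    rw [pow_succ 3 v, pow_mul, hC, hD]
    module

theorem exists_one_add_smul_pow (c : ℤ) (B : R) (u : ℕ) :
    ∃ Z : R, (1 + c • B) ^ u = 1 + (c * u) • B + c ^ 2 • Z := by
  induction u with
  | zero => exact ⟨0, by simp⟩
  | succ u ih =>
    obtain ⟨Z, hZ⟩ := ih
    refine ⟨Z + (u : ℤ) • (B * B) + c • (Z * B), ?_⟩
    rw [pow_succ, hZ]
    simp only [mul_add, add_mul, one_mul, mul_one, smul_mul_assoc, mul_smul_comm, smul_smul,
      smul_add]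
    push_cast
    module

theorem exists_one_add_smul_pow_three_pow_mul (j : ℕ) (B : R) (v u : ℕ) :
    ∃ C : R, (1 + (3 : ℤ) ^ (j + 1) • B) ^ (3 ^ v * u) =
      1 + (3 : ℤ) ^ (j + v + 1) • ((u : ℤ) • B + (3 : ℤ) • C) := by
  obtain ⟨C, hC⟩ := exists_one_add_smul_pow_three_pow j B v
  obtain ⟨Z, hZ⟩ := exists_one_add_smul_pow ((3 : ℤ) ^ (j + v + 1)) (B + (3 : ℤ) • C) u
  refine ⟨(u : ℤ) • C + (3 : ℤ) ^ (j + v) • Z, ?_⟩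
  rw [pow_mul, hC, hZ]
  simp only [smul_add, smul_smul]
  module

end PowOneAddSmul

theorem padicValNat_eq_of_natCast_eq_pow_mul {p a k : ℕ} [Fact p.Prime] {r : ℤ}
    (h : (a : ℤ) = p ^ k * r) (hr : ¬ (p : ℤ) ∣ r) : padicValNat p a = k := by
  have hr0 : r ≠ 0 := by rintro rfl; exact hr (dvd_zero _)
  have hp : (p : ℤ) ^ k ≠ 0 := pow_ne_zero _ (by exact_mod_cast (Fact.out : p.Prime).ne_zero)
  rw [← padicValInt.of_nat, h, padicValInt.mul hp hr0, padicValInt.eq_zero_of_not_dvd hr,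
    ← Nat.cast_pow, padicValInt.of_nat, padicValNat.prime_pow, add_zero]

theorem narayana_eq_narayanaMatrix_pow_apply (n : ℕ) :
    (narayana n : ℤ) = (narayanaMatrix ^ (n + 3)) 2 1 := by
  have h3 : narayanaMatrix ^ 3 *ᵥ ![0, 1, 0] = ![1, 1, 0] := by
    ext i; fin_cases i <;> decide
  have := congrFun (narayanaMatrix_pow_mulVec n) 2
  rw [← h3, mulVec_mulVec, ← pow_add] at this
  simpa [mulVec, dotProduct, Fin.sum_univ_succ] using this.symm

theorem exists_narayanaMatrix_pow_24 :
    ∃ A, narayanaMatrix ^ 24 = 1 + (3 : ℤ) ^ 2 • A ∧ A 2 1 = 142 := by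
  refine ⟨!![655, 305, 447; 447, 208, 305; 305, 142, 208], ?_, rfl⟩
  have h3 : narayanaMatrix ^ 3 = !![2, 1, 1; 1, 1, 1; 1, 0, 1] := by
    simp [pow_succ, narayanaMatrix]
  have h6 : narayanaMatrix ^ 6 = !![6, 3, 4; 4, 2, 3; 3, 1, 2] := by
    rw [show 6 = 3 * 2 from rfl, pow_mul, h3, sq]
    simp
  have h12 : narayanaMatrix ^ 12 = !![60, 28, 41; 41, 19, 28; 28, 13, 19] := by
    rw [show 12 = 6 * 2 from rfl, pow_mul, h6, sq]
    simp
  rw [show 24 = 12 * 2 from rfl, pow_mul, h12, sq]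
  ext i j
  fin_cases i <;> fin_cases j <;> simp

theorem narayana_val_21_general (n : ℕ) (h : n % 24 = 21) :
    padicValNat 3 (narayana n) = padicValNat 3 (n + 3) + 1 := by
  obtain ⟨N, hN⟩ : ∃ N, n + 3 = 24 * N := ⟨n / 24 + 1, by omega⟩
  obtain ⟨v, u, hu, rfl⟩ := Nat.exists_eq_pow_mul_and_not_dvd (by omega : N ≠ 0) 3 (by norm_num)
  obtain ⟨A, hA, hA21⟩ := exists_narayanaMatrix_pow_24
  obtain ⟨C, hC⟩ := exists_one_add_smul_pow_three_pow_mul 1 A v u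
  have hn3 : ((n + 3 : ℕ) : ℤ) = (3 : ℕ) ^ (v + 1) * (8 * u) := by rw [hN]; push_cast; ring
  have hn : (narayana n : ℤ) = (3 : ℕ) ^ (v + 2) * (142 * u + 3 * C 2 1) := by
    rw [narayana_eq_narayanaMatrix_pow_apply, hN, pow_mul, hA, hC]
    simp only [Matrix.add_apply, Matrix.smul_apply, smul_eq_mul, hA21,
      one_apply_ne (by decide : (2 : Fin 3) ≠ 1)]
    push_cast
    ring
  rw [padicValNat_eq_of_natCast_eq_pow_mul hn (by omega),
    padicValNat_eq_of_natCast_eq_pow_mul hn3 (by omega)]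

theorem narayana_val_21 (n : ℕ) (hn : 1 ≤ n) (h : n % 24 = 21) :
    padicValNat 3 (narayana n) = padicValNat 3 (n + 3) + 1 :=
  narayana_val_21_general n h
end

section
/- If n ≥ 1 and n ≡ 0 (mod 24), then ν_3(a_n) = ν_3(n) + 2, where ν_3 denotes the 3-adic valuation. -/
open Finset Matrix

section Valuation

variable {p : ℕ}

theorem padicValNat_add_two_le {k : ℕ} (hp : 3 ≤ p) (hk : 2 ≤ k) :
    padicValNat p k + 2 ≤ k := by
  have hpow : p * padicValNat p k ≤ k :=
    (Nat.mul_le_pow (by omega) _).trans (Nat.le_of_dvd (by omega) pow_padicValNat_dvd)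
  rcases Nat.eq_zero_or_pos (padicValNat p k) with h0 | hpos
  · omega
  · nlinarith

variable [Fact p.Prime]

theorem padicValNat_add_of_pow_succ_dvd {a b : ℕ} (ha : a ≠ 0)
    (hb : p ^ (padicValNat p a + 1) ∣ b) : padicValNat p (a + b) = padicValNat p a := by
  have hab : a + b ≠ 0 := by omega
  apply le_antisymm
  · by_contra! h
    have hdvd : p ^ (padicValNat p a + 1) ∣ a + b := (padicValNat_dvd_iff_le hab).2 h
    exact pow_succ_padicValNat_not_dvd ha ((Nat.dvd_add_left hb).1 hdvd)
  · exact (padicValNat_dvd_iff_le hab).1 <|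
      dvd_add pow_padicValNat_dvd ((pow_dvd_pow p (Nat.le_succ _)).trans hb)

theorem padicValNat_pow_mul_mul {e c x : ℕ} (hc : ¬p ∣ c) (hx : x ≠ 0) :
    padicValNat p (p ^ e * c * x) = e + padicValNat p x := by
  have hp := (Fact.out : p.Prime).ne_zero
  have hc0 : c ≠ 0 := by rintro rfl; simp at hc
  rw [padicValNat.mul (by simp [hp, hc0]) hx, padicValNat.mul (by simp [hp]) hc0,
    padicValNat.prime_pow, padicValNat.eq_zero_of_not_dvd hc, add_zero]

theorem pow_padicValNat_add_two_dvd_pow_mul_choose (hp : 3 ≤ p) (m : ℕ) {k : ℕ} (hk : 2 ≤ k) :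
    p ^ (padicValNat p m + 2) ∣ p ^ k * m.choose k := by
  rcases lt_or_ge m k with hmk | hkm
  · simp [Nat.choose_eq_zero_of_lt hmk]
  obtain ⟨n, rfl⟩ : ∃ n, m = n + 1 := ⟨m - 1, by omega⟩
  obtain ⟨j, rfl⟩ : ∃ j, k = j + 1 := ⟨k - 1, by omega⟩
  have hC : (n + 1).choose (j + 1) ≠ 0 := (Nat.choose_pos hkm).ne'
  have hm : padicValNat p (n + 1) ≤
      padicValNat p (j + 1) + padicValNat p ((n + 1).choose (j + 1)) := by
    rw [← padicValNat.mul (by omega) hC, mul_comm, ← Nat.add_one_mul_choose_eq,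
      padicValNat.mul (by omega) (Nat.choose_pos (by omega)).ne']
    omega
  calc p ^ (padicValNat p (n + 1) + 2)
      ∣ p ^ (j + 1 + padicValNat p ((n + 1).choose (j + 1))) :=
        pow_dvd_pow p (by have := padicValNat_add_two_le hp hk; omega)
    _ ∣ p ^ (j + 1) * (n + 1).choose (j + 1) := by
        rw [pow_add]; exact mul_dvd_mul_left _ pow_padicValNat_dvd

end Valuation

namespace Narayana

def M : Matrix (Fin 3) (Fin 3) ℕ := !![1, 0, 1; 1, 0, 0; 0, 1, 0]

def N : Matrix (Fin 3) (Fin 3) ℕ := !![1965, 915, 1341; 1341, 624, 915; 915, 426, 624]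

def v : Fin 3 → ℕ := ![1, 1, 0]

theorem M_pow_mulVec (n : ℕ) :
    M ^ n *ᵥ v = ![narayana (n + 2), narayana (n + 1), narayana n] := by
  induction n with
  | zero => ext i; fin_cases i <;> rfl
  | succ n ih =>
    rw [pow_succ', ← mulVec_mulVec, ih]
    ext i; fin_cases i <;> simp [M, mulVec, dotProduct, Fin.sum_univ_three, narayana]

theorem M_pow_24 : M ^ 24 = 1 + 3 • N := by decide

theorem N_mulVec_two : (N *ᵥ v) 2 = 3 ^ 2 * 149 := by decide

theorem N_sq_mulVec : N ^ 2 *ᵥ v = 3 ^ 2 • ![1028384, 701695, 478786] := by decide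

theorem three_sq_dvd_N_pow_mulVec {k : ℕ} (hk : 2 ≤ k) : 3 ^ 2 ∣ (N ^ k *ᵥ v) 2 := by
  obtain ⟨j, rfl⟩ := Nat.exists_eq_add_of_le' hk
  rw [pow_add, ← mulVec_mulVec, N_sq_mulVec, mulVec_smul]
  exact dvd_mul_right _ _

theorem narayana_24_mul (m : ℕ) :
    narayana (24 * m) = ∑ k ∈ range (m + 1), 3 ^ k * m.choose k * (N ^ k *ᵥ v) 2 := by
  have h := congrFun (M_pow_mulVec (24 * m)) 2
  simp only [Matrix.cons_val] at h
  rw [← h, pow_mul, M_pow_24, add_comm, (Commute.one_right _).add_pow, sum_mulVec,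
    Finset.sum_apply]
  refine sum_congr rfl fun k _ => ?_
  rw [one_pow, mul_one, smul_pow, ← Nat.cast_comm, ← nsmul_eq_mul, smul_smul, smul_mulVec,
    Pi.smul_apply, smul_eq_mul, mul_comm (m.choose k)]

theorem exists_narayana_24_mul_eq {m : ℕ} (hm : m ≠ 0) :
    ∃ t, narayana (24 * m) = 3 ^ 3 * 149 * m + 3 ^ (padicValNat 3 m + 4) * t := by
  obtain ⟨m, rfl⟩ : ∃ m', m = m' + 1 := ⟨m - 1, by omega⟩
  have hzero : 3 ^ 0 * (m + 1).choose 0 * (N ^ 0 *ᵥ v) 2 = 0 := by simp [v]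
  have hone : 3 ^ (0 + 1) * (m + 1).choose (0 + 1) * (N ^ (0 + 1) *ᵥ v) 2 =
      3 ^ 3 * 149 * (m + 1) := by
    rw [zero_add, pow_one, pow_one, Nat.choose_one_right, N_mulVec_two]; ring
  obtain ⟨t, ht⟩ : 3 ^ (padicValNat 3 (m + 1) + 4) ∣
      ∑ k ∈ range m, 3 ^ (k + 1 + 1) * (m + 1).choose (k + 1 + 1) * (N ^ (k + 1 + 1) *ᵥ v) 2 :=
    dvd_sum fun k _ => by
      have hk : 2 ≤ k + 1 + 1 := by omega
      rw [pow_add _ (padicValNat 3 (m + 1)) 4, show 3 ^ 4 = 3 ^ 2 * 3 ^ 2 by norm_num,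
        ← mul_assoc, ← pow_add]
      exact mul_dvd_mul (pow_padicValNat_add_two_dvd_pow_mul_choose le_rfl _ hk)
        (three_sq_dvd_N_pow_mulVec hk)
  refine ⟨t, ?_⟩
  rw [narayana_24_mul, sum_range_succ', sum_range_succ', hzero, hone, ht]
  ring

end Narayana

open Narayana in
theorem narayana_val_0 (n : ℕ) (hn : 1 ≤ n) (h : n % 24 = 0) :
    padicValNat 3 (narayana n) = padicValNat 3 n + 2 := by
  obtain ⟨m, rfl⟩ : ∃ m, n = 24 * m := ⟨n / 24, by omega⟩
  have hm : m ≠ 0 := by omega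
  have hlead : padicValNat 3 (3 ^ 3 * 149 * m) = 3 + padicValNat 3 m :=
    padicValNat_pow_mul_mul (by norm_num) hm
  have h24 : padicValNat 3 (3 ^ 1 * 8 * m) = 1 + padicValNat 3 m :=
    padicValNat_pow_mul_mul (by norm_num) hm
  obtain ⟨t, ht⟩ := exists_narayana_24_mul_eq hm
  have htail : 3 ^ (padicValNat 3 (3 ^ 3 * 149 * m) + 1) ∣ 3 ^ (padicValNat 3 m + 4) * t := by
    rw [hlead]; exact (pow_dvd_pow 3 (by omega)).mul_right t
  rw [ht, padicValNat_add_of_pow_succ_dvd (by positivity) htail, hlead,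
    show 24 * m = 3 ^ 1 * 8 * m by ring, h24]
  omega
end
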